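/- Let b, c : ℝ → ℝ be smooth, take m ≡ 0, and let u : ℝ² → ℝ be a smooth solution of ∂ₜ²u − ∂ₓ²u + b(u)·∂ₜu + c(u)·∂ₓu = 0. Then the current generated by the time-translation symmetry characteristic p = −∂ₜu together with the adjoint-symmetry q = 1, namely Ψᵗ = −∂ₜ²u − b(u)·∂ₜu and Ψˣ = ∂ₜ∂ₓu − c(u)·∂ₜu, is locally trivial: with θ = C(u) − ∂ₓu one has Ψᵗ = ∂ₓθ and Ψˣ = −∂ₜθ on ℝ². -/

import Mathlib

/-! The current `Ψ` is the curl of `θ = C(u) − ∂ₓu`: by the chain rule (with `C' = c` by the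
fundamental theorem of calculus) `−∂ₜθ = ∂ₜ∂ₓu − c(u) ∂ₜu` identically, while
`∂ₓθ = c(u) ∂ₓu − ∂ₓ²u`, which equals `−∂ₜ²u − b(u) ∂ₜu` exactly because `u` solves the equation. -/

noncomputable section

open Real

/-- Partial derivative in the first (time) variable. -/
def Dt (u : ℝ → ℝ → ℝ) : ℝ → ℝ → ℝ := fun t x => deriv (fun s => u s x) t

/-- Partial derivative in the second (space) variable. -/
def Dx (u : ℝ → ℝ → ℝ) : ℝ → ℝ → ℝ := fun t x => deriv (fun s => u t s) x

/-- Smoothness (C^∞) of a function of two real variables. -/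
def Smooth2 (u : ℝ → ℝ → ℝ) : Prop := ContDiff ℝ (⊤ : ℕ∞) (fun p : ℝ × ℝ => u p.1 p.2)

namespace Smooth2

variable {u v : ℝ → ℝ → ℝ}

lemma hasDerivAt_dt (hu : Smooth2 u) (t x : ℝ) : HasDerivAt (fun s => u s x) (Dt u t x) t :=
  ((hu.differentiable (by simp) _).comp t
    (differentiableAt_id.prodMk (differentiableAt_const x))).hasDerivAt

lemma hasDerivAt_dx (hu : Smooth2 u) (t x : ℝ) : HasDerivAt (fun s => u t s) (Dx u t x) x :=
  ((hu.differentiable (by simp) _).comp x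
    ((differentiableAt_const t).prodMk differentiableAt_id)).hasDerivAt

lemma dx (hu : Smooth2 u) : Smooth2 (Dx u) := by
  have hDx : (fun p : ℝ × ℝ => Dx u p.1 p.2) =
      fun p => fderiv ℝ (fun q : ℝ × ℝ => u q.1 q.2) p (0, 1) := by
    funext p
    exact ((hu.differentiable (by simp) p).hasFDerivAt.comp_hasDerivAt p.2
      ((hasDerivAt_const p.2 p.1).prodMk (hasDerivAt_id p.2))).deriv
  unfold Smooth2
  rw [hDx]
  exact (hu.fderiv_right (m := (⊤ : ℕ∞)) (by exact_mod_cast le_top)).clm_apply contDiff_const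

variable {C c : ℝ → ℝ}

lemma dt_comp_sub (hC : ∀ y, HasDerivAt C (c y) y) (hu : Smooth2 u) (hv : Smooth2 v) (t x : ℝ) :
    Dt (fun t x => C (u t x) - v t x) t x = c (u t x) * Dt u t x - Dt v t x :=
  (((hC _).comp t (hu.hasDerivAt_dt t x)).sub (hv.hasDerivAt_dt t x)).deriv

lemma dx_comp_sub (hC : ∀ y, HasDerivAt C (c y) y) (hu : Smooth2 u) (hv : Smooth2 v) (t x : ℝ) :
    Dx (fun t x => C (u t x) - v t x) t x = c (u t x) * Dx u t x - Dx v t x :=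
  (((hC _).comp x (hu.hasDerivAt_dx t x)).sub (hv.hasDerivAt_dx t x)).deriv

end Smooth2

theorem stmt_12_general
    (b c : ℝ → ℝ) (hc : ContDiff ℝ (⊤ : ℕ∞) c)
    (C : ℝ → ℝ) (hC : ∀ y, C y = ∫ s in (0:ℝ)..y, c s)
    (u : ℝ → ℝ → ℝ) (hu : Smooth2 u)
    (hsol : ∀ t x,
      Dt (Dt u) t x - Dx (Dx u) t x + b (u t x) * Dt u t x + c (u t x) * Dx u t x = 0) :
    (∀ t x : ℝ,
      -(Dt (Dt u) t x) - b (u t x) * Dt u t x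
        = Dx (fun t x => C (u t x) - Dx u t x) t x)
    ∧ (∀ t x : ℝ,
      Dt (Dx u) t x - c (u t x) * Dt u t x
        = -(Dt (fun t x => C (u t x) - Dx u t x) t x)) := by
  have hC' : ∀ y, HasDerivAt C (c y) y := fun y => by
    rw [funext hC]
    exact (hc.continuous.integral_hasStrictDerivAt 0 y).hasDerivAt
  constructor
  · intro t x
    rw [Smooth2.dx_comp_sub hC' hu hu.dx]
    linarith [hsol t x]
  · intro t x
    rw [Smooth2.dt_comp_sub hC' hu hu.dx]
    ring

/-- For m ≡ 0, the current generated by the time-translation characteristic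
p = −∂ₜu and adjoint-symmetry q = 1 is locally trivial: (Ψᵗ, Ψˣ) = (∂ₓθ, −∂ₜθ)
with θ = C(u) − ∂ₓu. -/
theorem stmt_12
    (b c : ℝ → ℝ) (hb : ContDiff ℝ (⊤ : ℕ∞) b) (hc : ContDiff ℝ (⊤ : ℕ∞) c)
    (C : ℝ → ℝ) (hC : ∀ y, C y = ∫ s in (0:ℝ)..y, c s)
    (u : ℝ → ℝ → ℝ) (hu : Smooth2 u)
    (hsol : ∀ t x,
      Dt (Dt u) t x - Dx (Dx u) t x + b (u t x) * Dt u t x + c (u t x) * Dx u t x = 0) :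
    (∀ t x : ℝ,
      -(Dt (Dt u) t x) - b (u t x) * Dt u t x
        = Dx (fun t x => C (u t x) - Dx u t x) t x)
    ∧ (∀ t x : ℝ,
      Dt (Dx u) t x - c (u t x) * Dt u t x
        = -(Dt (fun t x => C (u t x) - Dx u t x) t x)) :=
  stmt_12_general b c hc C hC u hu hsol
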